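/- Let $\phi : M \times [0,T) \to \mathbb{R}_{\geq 0}$ be continuous, where $M$ is compact, and suppose that for every $x$, the function $t \mapsto \phi(x,t)^2$ is differentiable with $\frac{\partial}{\partial t} \phi(x,t)^2 \leq -\tfrac12 (S(x) + \phi(x,t)^2)\,\phi(x,t)^2$ for a continuous function $S : M \to \mathbb{R}$. Let $S_0 = \min_M S$. Then for every $\epsilon > 0$, if $\sup_M \phi(\cdot, 0) \leq \sqrt{|S_0|} + \epsilon$, then $\sup_{M \times [0,T)} \phi \leq \sqrt{|S_0|} + \epsilon$. In particular $\sup_{t \in [0,T)} \sup_M \phi(\cdot, t) < \infty$. -/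
import Mathlib


/-- Let `M` be compact, `φ : M × [0,T) → ℝ≥0` continuous, with `t ↦ φ(x,t)²` differentiable
satisfying `∂ₜ φ² ≤ -(1/2)(S + φ²)φ²` for a continuous `S : M → ℝ`, and `S₀ = min S`.
Then for every `ε > 0`, if `sup_M φ(·,0) ≤ √|S₀| + ε` then
`φ(x,t) ≤ √|S₀| + ε` for all `x` and `t ∈ [0,T)`. -/
theorem stmt_6 {M : Type*} [TopologicalSpace M] [CompactSpace M] [Nonempty M]
    {T : ℝ} (φ : M → ℝ → ℝ) (g : M → ℝ → ℝ) (S : M → ℝ)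
    (hφcont : Continuous fun p : M × ℝ => φ p.1 p.2)
    (hφnn : ∀ x t, 0 ≤ φ x t)
    (hS : Continuous S)
    (hderiv : ∀ x, ∀ t ∈ Set.Ico (0:ℝ) T, HasDerivAt (fun s => (φ x s) ^ 2) (g x t) t)
    (hineq : ∀ x, ∀ t ∈ Set.Ico (0:ℝ) T,
      g x t ≤ -(1/2) * (S x + (φ x t) ^ 2) * (φ x t) ^ 2) :
    ∀ ε > (0:ℝ),
      (∀ x, φ x 0 ≤ Real.sqrt |sInf (Set.range S)| + ε) →
      ∀ x, ∀ t ∈ Set.Ico (0:ℝ) T, φ x t ≤ Real.sqrt |sInf (Set.range S)| + ε := by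
  intro ε hε hinit x t0 ht0
  set B : ℝ := Real.sqrt |sInf (Set.range S)| + ε with hB
  have hBpos : 0 < B := by positivity
  set c : ℝ := B ^ 2 with hc
  have hcpos : 0 < c := by positivity
  set f : ℝ → ℝ := fun s => (φ x s) ^ 2 with hf
  have hfc : Continuous f := by
    have : Continuous fun s => φ x s :=
      hφcont.comp (continuous_const.prodMk continuous_id)
    exact this.pow 2
  -- |S₀| < c and S₀ ≤ S x
  have hS0 : sInf (Set.range S) ≤ S x :=
    csInf_le (isCompact_range hS).bddBelow (Set.mem_range_self x)
  have habs : |sInf (Set.range S)| < c := by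
    have h1 : |sInf (Set.range S)| = Real.sqrt |sInf (Set.range S)| ^ 2 :=
      (Real.sq_sqrt (abs_nonneg _)).symm
    rw [h1, hc, hB]
    nlinarith [Real.sqrt_nonneg |sInf (Set.range S)|]
  have hSx : -S x < c := by
    have : -S x ≤ |sInf (Set.range S)| := by
      have := neg_abs_le (sInf (Set.range S))
      linarith
    linarith
  -- reduce to f t0 ≤ c
  suffices hft0 : f t0 ≤ c by
    have := Real.sqrt_le_sqrt hft0
    rwa [hf, Real.sqrt_sq (hφnn x t0), hc, Real.sqrt_sq hBpos.le] at this
  by_contra hcon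
  push_neg at hcon
  have ht00 : 0 ≤ t0 := ht0.1
  have hf0 : f 0 ≤ c := by
    have := hinit x
    have : φ x 0 ≤ B := this
    exact pow_le_pow_left₀ (hφnn x 0) this 2
  set K : Set ℝ := {t ∈ Set.Icc 0 t0 | f t ≤ c} with hK
  have hKne : K.Nonempty := ⟨0, ⟨le_refl 0, ht00⟩, hf0⟩
  have hclosed : IsClosed K := isClosed_Icc.inter (isClosed_le hfc continuous_const)
  have hKsub : K ⊆ Set.Icc 0 t0 := fun t ht => ht.1
  have hKcompact : IsCompact K := isCompact_Icc.of_isClosed_subset hclosed hKsub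
  set t1 : ℝ := sSup K with ht1def
  have ht1mem : t1 ∈ K := hKcompact.sSup_mem hKne
  have ht1Icc : t1 ∈ Set.Icc 0 t0 := ht1mem.1
  have hft1 : f t1 ≤ c := ht1mem.2
  have ht1lt : t1 < t0 := lt_of_le_of_ne ht1Icc.2 (by
    intro h; rw [h] at hft1; linarith)
  have hgt : ∀ t ∈ Set.Ioc t1 t0, c < f t := by
    intro t ht
    by_contra hle
    push_neg at hle
    have : t ∈ K := ⟨⟨le_trans ht1Icc.1 ht.1.le, ht.2⟩, hle⟩
    exact absurd (le_csSup hKcompact.bddAbove this) (not_le.mpr ht.1)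
  have hanti : StrictAntiOn f (Set.Icc t1 t0) := by
    apply strictAntiOn_of_deriv_neg (convex_Icc t1 t0) hfc.continuousOn
    intro t ht
    rw [interior_Icc] at ht
    have htIco : t ∈ Set.Ico (0:ℝ) T :=
      ⟨le_trans ht1Icc.1 ht.1.le, lt_trans ht.2 ht0.2⟩
    have hd := hderiv x t htIco
    rw [hd.deriv]
    have hgle := hineq x t htIco
    have hft : c < f t := hgt t ⟨ht.1, ht.2.le⟩
    have hpos : 0 < S x + (φ x t) ^ 2 := by
      have : (φ x t) ^ 2 = f t := rfl
      nlinarith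
    have : (0:ℝ) < (φ x t) ^ 2 := by
      have : (φ x t) ^ 2 = f t := rfl
      nlinarith
    nlinarith
  have : f t0 < f t1 :=
    hanti ⟨le_refl t1, ht1lt.le⟩ ⟨ht1lt.le, le_refl t0⟩ ht1lt
  linarith
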